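/- arXiv:0801.1423 — 3 statements merged into one kernel-verified Lean document; each statement's English description precedes it below -/
import Mathlib

section
/- Let M > 0 and a ∈ ℝ with M² > a², and let r > r₁ = M + √(M² − a²) and x ∈ (−1,1) be such that r² − 2Mr + a²x² < 0 (i.e., the point lies in the ergosphere). Let G = G(r,x) be the symmetric 4×4 matrix of the Kerr metric in Boyer–Lindquist coordinates (t, r, ϑ, φ): G_tt = (Δ − a²s²)/U, G_tφ = G_φt = 2Mar s²/U, G_rr = −U/Δ, G_ϑϑ = −U, G_φφ = −s²((r²+a²)² − Δ a² s²)/U, all other entries zero, where s² = 1 − x², Δ = r² − 2Mr + a², U = r² + a²x². Then there exists a vector v ∈ ℝ⁴ with vᵀ G v > 0 (i.e., v is timelike for the signature (+,−,−,−)) and vᵀ G e_t < 0, where e_t is the coordinate basis vector in the t-direction. That is, inside the ergosphere there exist timelike vectors whose conserved energy ⟨v, ∂_t⟩ is negative, which is the basis of the Penrose energy-extraction process. -/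
open Matrix

/-- **Negative-energy timelike vectors inside the ergosphere (Penrose process).**
Let `M > 0`, `M² > a²`, and let `(r, x)` with `r > r₁ = M + √(M² − a²)`,
`x ∈ (−1,1)` lie in the ergosphere, i.e. `r² − 2Mr + a²x² < 0`. Let `G` be the
symmetric 4×4 matrix of the Kerr metric in Boyer–Lindquist coordinates
`(t, r, ϑ, φ)` (signature `(+,−,−,−)`). Then there exists a vector `v ∈ ℝ⁴`
which is timelike, `vᵀ G v > 0`, and has negative conserved energy
`vᵀ G e_t < 0`, where `e_t` is the coordinate basis vector in the `t`-direction. -/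
theorem kerr_ergosphere_negative_energy_timelike (M a r x : ℝ)
    (hM : 0 < M) (ha : a ^ 2 < M ^ 2)
    (hr : M + Real.sqrt (M ^ 2 - a ^ 2) < r) (hx : x ∈ Set.Ioo (-1 : ℝ) 1)
    (hergo : r ^ 2 - 2 * M * r + a ^ 2 * x ^ 2 < 0) :
    let Δ : ℝ := r ^ 2 - 2 * M * r + a ^ 2
    let U : ℝ := r ^ 2 + a ^ 2 * x ^ 2
    let s2 : ℝ := 1 - x ^ 2
    let G : Matrix (Fin 4) (Fin 4) ℝ :=
      !![(Δ - a ^ 2 * s2) / U, 0, 0, 2 * M * a * r * s2 / U;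
         0, -U / Δ, 0, 0;
         0, 0, -U, 0;
         2 * M * a * r * s2 / U, 0, 0, -(s2 * ((r ^ 2 + a ^ 2) ^ 2 - Δ * a ^ 2 * s2)) / U]
    ∃ v : Fin 4 → ℝ,
      0 < v ⬝ᵥ G.mulVec v ∧ v ⬝ᵥ G.mulVec ![1, 0, 0, 0] < 0 := by
  intro Δ U s2 G
  have hΔd : Δ = r ^ 2 - 2 * M * r + a ^ 2 := rfl
  have hUd : U = r ^ 2 + a ^ 2 * x ^ 2 := rfl
  have hs2d : s2 = 1 - x ^ 2 := rfl
  have hG : G = !![(Δ - a ^ 2 * s2) / U, 0, 0, 2 * M * a * r * s2 / U;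
         0, -U / Δ, 0, 0;
         0, 0, -U, 0;
         2 * M * a * r * s2 / U, 0, 0,
           -(s2 * ((r ^ 2 + a ^ 2) ^ 2 - Δ * a ^ 2 * s2)) / U] := rfl
  clear_value Δ U s2 G
  obtain ⟨hx1, hx2⟩ := hx
  have hsq : Real.sqrt (M ^ 2 - a ^ 2) ≥ 0 := Real.sqrt_nonneg _
  have hsqs : Real.sqrt (M ^ 2 - a ^ 2) ^ 2 = M ^ 2 - a ^ 2 := by
    rw [Real.sq_sqrt]; linarith
  have hr0 : 0 < r := by linarith
  have hΔ : 0 < Δ := by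
    have h1 : r - M > Real.sqrt (M ^ 2 - a ^ 2) := by linarith
    rw [hΔd]; nlinarith [sq_nonneg (r - M)]
  have hU : 0 < U := by rw [hUd]; positivity
  have hs2 : 0 < s2 := by rw [hs2d]; nlinarith
  set A : ℝ := (Δ - a ^ 2 * s2) / U with hA
  set B : ℝ := 2 * M * a * r * s2 / U with hB
  set C : ℝ := -(s2 * ((r ^ 2 + a ^ 2) ^ 2 - Δ * a ^ 2 * s2)) / U with hC
  have hAneg : A < 0 := by
    apply div_neg_of_neg_of_pos _ hU
    rw [hΔd, hs2d]; nlinarith [hergo]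
  have hA0 : A ≠ 0 := ne_of_lt hAneg
  have hU0 : U ≠ 0 := ne_of_gt hU
  have hdet : A * C - B ^ 2 = -(Δ * s2) := by
    rw [hA, hB, hC]
    field_simp
    rw [hΔd, hUd, hs2d]
    ring
  set q : ℝ := Real.sqrt (Δ * s2) with hqdef
  have hq2 : q ^ 2 = Δ * s2 := Real.sq_sqrt (by positivity)
  have hqpos : 0 < q := Real.sqrt_pos.mpr (by positivity)
  set v0 : ℝ := -(B + q / 2) / A with hv0
  have hE : A * v0 + B = -q / 2 := by rw [hv0]; field_simp; ring
  refine ⟨![v0, 0, 0, 1], ?_, ?_⟩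
  · have hdot : (![v0, 0, 0, 1] : Fin 4 → ℝ) ⬝ᵥ G.mulVec ![v0, 0, 0, 1]
        = A * v0 ^ 2 + 2 * B * v0 + C := by
      rw [hG]
      simp [Matrix.mulVec, dotProduct, Fin.sum_univ_four, hA, hB, hC]
      ring
    rw [hdot]
    have hAQ : A * (A * v0 ^ 2 + 2 * B * v0 + C) = -(3 * (Δ * s2)) / 4 := by
      have h2 : A * (A * v0 ^ 2 + 2 * B * v0 + C)
          = (A * v0 + B) ^ 2 + (A * C - B ^ 2) := by ring
      rw [h2, hdet, hE]
      linear_combination hq2 / 4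
    have hQeq : A * v0 ^ 2 + 2 * B * v0 + C
        = (A * (A * v0 ^ 2 + 2 * B * v0 + C)) / A := by
      field_simp
    rw [hQeq, hAQ]
    apply div_pos_iff.mpr
    refine Or.inr ⟨?_, hAneg⟩
    have := mul_pos hΔ hs2
    linarith
  · have hdot : (![v0, 0, 0, 1] : Fin 4 → ℝ) ⬝ᵥ G.mulVec ![1, 0, 0, 0]
        = A * v0 + B := by
      rw [hG]
      simp [Matrix.mulVec, dotProduct, Fin.sum_univ_four, hA, hB]
      ring
    rw [hdot, hE]
    linarith
end

section
/- Let I ⊆ ℝ be an interval and let M, a : I → ℝ be differentiable functions with M(t) > 0 and 0 < a(t)² < M(t)² for all t. Define r₁(t) = M(t) + √(M(t)² − a(t)²) and the irreducible mass by M_irr(t)² = ½ (M(t)² + √(M(t)⁴ − (a(t)M(t))²)). Assume a(t) > 0 and that at every t the Christodoulou inequality holds: (d/dt)(a(t)M(t)) ≤ ((r₁(t)² + a(t)²)/a(t)) · M'(t). Then t ↦ M_irr(t)² is nondecreasing on I; consequently, since M(t)² ≥ M_irr(t)² always, one has M(t) ≥ M_irr(t) ≥ M_irr(t₀) for all t ≥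 t₀ in I: the mass of the black hole can never be reduced below its initial irreducible mass. -/
/-!
With `s = √(M² - a²)` one has `√(M⁴ - (aM)²) = M s` and `r₁² + a² = 2 M r₁` for `r₁ = M + s`.
Differentiating `M_irr² = ½ (M² + M s)` and using these identities gives, for `J = a M`,
`(M_irr²)' = a (((r₁² + a²)/a) M' - J') / (2 s)`, which is nonnegative exactly by the
Christodoulou inequality. Hence `M_irr²` is monotone, and `M_irr ≤ M` since `M s ≤ M²`.
-/

open Real

noncomputable def irreducibleMassSq (M a : ℝ) : ℝ :=
  1 / 2 * (M ^ 2 + √(M ^ 4 - (a * M) ^ 2))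

lemma sqrt_pow_four_sub_mul_sq {M : ℝ} (hM : 0 ≤ M) (a : ℝ) :
    √(M ^ 4 - (a * M) ^ 2) = M * √(M ^ 2 - a ^ 2) := by
  rw [show M ^ 4 - (a * M) ^ 2 = M ^ 2 * (M ^ 2 - a ^ 2) by ring,
    sqrt_mul (sq_nonneg M), sqrt_sq hM]

lemma horizon_sq_add_sq {M a : ℝ} (h : a ^ 2 ≤ M ^ 2) :
    (M + √(M ^ 2 - a ^ 2)) ^ 2 + a ^ 2 = 2 * M * (M + √(M ^ 2 - a ^ 2)) := by
  linear_combination sq_sqrt (sub_nonneg.2 h)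

lemma irreducibleMassSq_le_sq (M a : ℝ) : irreducibleMassSq M a ≤ M ^ 2 := by
  have : √(M ^ 4 - (a * M) ^ 2) ≤ M ^ 2 := by
    rw [sqrt_le_left (sq_nonneg M)]
    nlinarith [sq_nonneg (a * M)]
  unfold irreducibleMassSq
  linarith

lemma sqrt_irreducibleMassSq_le {M : ℝ} (hM : 0 ≤ M) (a : ℝ) :
    √(irreducibleMassSq M a) ≤ M :=
  (sqrt_le_sqrt (irreducibleMassSq_le_sq M a)).trans_eq (sqrt_sq hM)

lemma HasDerivAt.irreducibleMassSq {M a : ℝ → ℝ} {M' a' t : ℝ} (hM : HasDerivAt M M' t)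
    (ha : HasDerivAt a a' t) (hMpos : 0 < M t) (hlt : a t ^ 2 < M t ^ 2) :
    HasDerivAt (fun t => irreducibleMassSq (M t) (a t))
      ((2 * M t * (M t + √(M t ^ 2 - a t ^ 2)) * M' - a t * (a' * M t + a t * M')) /
        (2 * √(M t ^ 2 - a t ^ 2))) t := by
  have hs : 0 < √(M t ^ 2 - a t ^ 2) := sqrt_pos.2 (sub_pos.2 hlt)
  have hG : HasDerivAt (fun t => M t ^ 4 - (a t * M t) ^ 2)
      (4 * M t ^ 3 * M' - 2 * (a t * M t) * (a' * M t + a t * M')) t := by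
    simpa using (hM.fun_pow 4).fun_sub ((ha.mul hM).fun_pow 2)
  have hG_ne : M t ^ 4 - (a t * M t) ^ 2 ≠ 0 := by
    rw [← sq_sqrt (by nlinarith : 0 ≤ M t ^ 4 - (a t * M t) ^ 2),
      sqrt_pow_four_sub_mul_sq hMpos.le]
    positivity
  refine (((hM.fun_pow 2).fun_add (hG.sqrt hG_ne)).const_mul (1 / 2)).congr_deriv ?_
  rw [sqrt_pow_four_sub_mul_sq hMpos.le]
  field_simp
  ring

lemma irreducibleMassSq_deriv_nonneg {M a M' J' : ℝ} (ha : 0 < a) (hle : a ^ 2 ≤ M ^ 2)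
    (hChristodoulou : J' ≤ ((M + √(M ^ 2 - a ^ 2)) ^ 2 + a ^ 2) / a * M') :
    0 ≤ (2 * M * (M + √(M ^ 2 - a ^ 2)) * M' - a * J') / (2 * √(M ^ 2 - a ^ 2)) := by
  rw [horizon_sq_add_sq hle, div_mul_eq_mul_div, le_div_iff₀ ha] at hChristodoulou
  apply div_nonneg _ (by positivity)
  linarith

lemma monotoneOn_of_hasDerivAt_nonneg {D : Set ℝ} (hD : Convex ℝ D) {f f' : ℝ → ℝ}
    (hf : ∀ x ∈ D, HasDerivAt f (f' x) x) (hf'₀ : ∀ x ∈ D, 0 ≤ f' x) : MonotoneOn f D :=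
  monotoneOn_of_hasDerivWithinAt_nonneg hD
    (fun x hx => (hf x hx).continuousAt.continuousWithinAt)
    (fun x hx => (hf x (interior_subset hx)).hasDerivWithinAt)
    (fun x hx => hf'₀ x (interior_subset hx))

/-- **Irreducibility of the irreducible mass (Christodoulou).**
Let `I ⊆ ℝ` be an interval and `M, a : I → ℝ` differentiable with `M > 0`,
`0 < a² < M²` and `a > 0` on `I`. Define `r₁ = M + √(M² − a²)` and the irreducible
mass by `M_irr² = ½(M² + √(M⁴ − (aM)²))`. If the Christodoulou inequality
`(d/dt)(aM) ≤ ((r₁² + a²)/a)·M'` holds on `I`, then `t ↦ M_irr(t)²` is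
nondecreasing on `I`, and consequently `M(t) ≥ M_irr(t) ≥ M_irr(t₀)` for all
`t ≥ t₀` in `I`: the mass can never be reduced below its initial irreducible mass. -/
theorem irreducible_mass_nondecreasing (I : Set ℝ) (hI : I.OrdConnected)
    (M a M' a' : ℝ → ℝ)
    (hM : ∀ t ∈ I, HasDerivAt M (M' t) t)
    (ha : ∀ t ∈ I, HasDerivAt a (a' t) t)
    (hMpos : ∀ t ∈ I, 0 < M t)
    (hbound : ∀ t ∈ I, 0 < (a t) ^ 2 ∧ (a t) ^ 2 < (M t) ^ 2)
    (hapos : ∀ t ∈ I, 0 < a t)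
    (hChristodoulou : ∀ t ∈ I,
      a' t * M t + a t * M' t ≤
        (((M t + Real.sqrt ((M t) ^ 2 - (a t) ^ 2)) ^ 2 + (a t) ^ 2) / a t) * M' t) :
    MonotoneOn
        (fun t => (1 / 2) * ((M t) ^ 2 + Real.sqrt ((M t) ^ 4 - (a t * M t) ^ 2))) I
    ∧ ∀ t₀ ∈ I, ∀ t ∈ I, t₀ ≤ t →
        Real.sqrt ((1 / 2) * ((M t₀) ^ 2 + Real.sqrt ((M t₀) ^ 4 - (a t₀ * M t₀) ^ 2)))
            ≤ Real.sqrt ((1 / 2) * ((M t) ^ 2 + Real.sqrt ((M t) ^ 4 - (a t * M t) ^ 2)))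
        ∧ Real.sqrt ((1 / 2) * ((M t) ^ 2 + Real.sqrt ((M t) ^ 4 - (a t * M t) ^ 2)))
            ≤ M t := by
  have mono : MonotoneOn (fun t => irreducibleMassSq (M t) (a t)) I :=
    monotoneOn_of_hasDerivAt_nonneg hI.convex
      (fun t ht => (hM t ht).irreducibleMassSq (ha t ht) (hMpos t ht) (hbound t ht).2)
      (fun t ht => irreducibleMassSq_deriv_nonneg (hapos t ht) (hbound t ht).2.le
        (hChristodoulou t ht))
  exact ⟨mono, fun t₀ ht₀ t ht hle =>
    ⟨sqrt_le_sqrt (mono ht₀ ht hle), sqrt_irreducibleMassSq_le (hMpos t ht).le (a t)⟩⟩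
end

section
/- Let V : ℝ → ℝ be continuous, and let ω, Ω ∈ ℝ with ω ≠ 0. Let φ́, φ̀ : ℝ → ℂ be twice continuously differentiable solutions of φ'' = Vφ with the asymptotics: lim_{u → −∞} (φ́(u) − e^{iΩu}) = 0 and lim_{u → −∞} (φ́'(u) − iΩ e^{iΩu}) = 0; lim_{u → +∞} (φ̀(u) − e^{−iωu}) = 0 and lim_{u → +∞} (φ̀'(u) + iω e^{−iωu}) = 0. Suppose A, B ∈ ℂ are such that \overline{φ́} = A φ̀ + B \overline{φ̀} on ℝ. Then the reflection and transmission coefficients satisfy |A|² − |B|² = Ω/ω. -/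
/-!
Since the potential is real, `W(φ) = φ φ̄' − φ' φ̄` is constant for every solution `φ`, so it can
be read off from the asymptotic plane wave: `W(φ́) = −2iΩ` (at the horizon) and `W(φ̀) = 2iω`
(at infinity). Moreover `W(φ̄) = −W(φ)` and `W(Aφ + Bφ̄) = (|A|² − |B|²) W(φ)`; applied to
`conj φ́ = A φ̀ + B (conj φ̀)` these give `2iΩ = (|A|² − |B|²) · 2iω`.
-/

open Filter ComplexConjugate Topology

/-- The Wronskian of `φ` and `φ̄` at a point where `φ = z` and `φ' = w`. -/
def conjWronskian (z w : ℂ) : ℂ := z * conj w - w * conj z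

lemma conjWronskian_conj (z w : ℂ) :
    conjWronskian (conj z) (conj w) = -conjWronskian z w := by
  simp only [conjWronskian, Complex.conj_conj]
  ring

lemma conjWronskian_add_conj (a b z w : ℂ) :
    conjWronskian (a * z + b * conj z) (a * w + b * conj w)
      = (‖a‖ ^ 2 - ‖b‖ ^ 2 : ℝ) * conjWronskian z w := by
  simp only [conjWronskian, map_add, map_mul, Complex.conj_conj]
  push_cast
  rw [← Complex.mul_conj', ← Complex.mul_conj']
  ring

lemma conjWronskian_I_mul (z : ℂ) (k : ℝ) :
    conjWronskian z (Complex.I * k * z) = -2 * Complex.I * k * (‖z‖ ^ 2 : ℝ) := by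
  simp only [conjWronskian, map_mul, Complex.conj_I, Complex.conj_ofReal]
  push_cast
  rw [← Complex.mul_conj']
  ring

lemma Filter.Tendsto.mul_sub_mul_of_isBoundedUnder {α R : Type*} [NonUnitalSeminormedRing R]
    {l : Filter α} {p q P Q : α → R} (hp : Tendsto (fun x => p x - P x) l (𝓝 0))
    (hq : Tendsto (fun x => q x - Q x) l (𝓝 0))
    (hP : IsBoundedUnder (· ≤ ·) l fun x => ‖P x‖)
    (hQ : IsBoundedUnder (· ≤ ·) l fun x => ‖Q x‖) :
    Tendsto (fun x => p x * q x - P x * Q x) l (𝓝 0) := by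
  have h := ((hp.mul hq).add (isBoundedUnder_le_mul_tendsto_zero hP hq)).add
    (hp.zero_mul_isBoundedUnder_le hQ)
  simp only [mul_zero, add_zero] at h
  exact h.congr fun x => by noncomm_ring

lemma Filter.Tendsto.conjWronskian_sub {α : Type*} {l : Filter α}
    {p q P Q : α → ℂ} (hp : Tendsto (fun x => p x - P x) l (𝓝 0))
    (hq : Tendsto (fun x => q x - Q x) l (𝓝 0))
    (hP : IsBoundedUnder (· ≤ ·) l fun x => ‖P x‖)
    (hQ : IsBoundedUnder (· ≤ ·) l fun x => ‖Q x‖) :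
    Tendsto (fun x => conjWronskian (p x) (q x) - conjWronskian (P x) (Q x)) l (𝓝 0) := by
  have conj_tendsto {f g : α → ℂ} (h : Tendsto (fun x => f x - g x) l (𝓝 0)) :
      Tendsto (fun x => conj (f x) - conj (g x)) l (𝓝 0) := by
    simpa only [Function.comp_def, map_sub, map_zero] using
      (Complex.continuous_conj.tendsto 0).comp h
  have conj_bdd {f : α → ℂ} (h : IsBoundedUnder (· ≤ ·) l fun x => ‖f x‖) :
      IsBoundedUnder (· ≤ ·) l fun x => ‖conj (f x)‖ := by
    simpa only [Complex.norm_conj] using h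
  have h := (hp.mul_sub_mul_of_isBoundedUnder (conj_tendsto hq) hP (conj_bdd hQ)).sub
    (hq.mul_sub_mul_of_isBoundedUnder (conj_tendsto hp) hQ (conj_bdd hP))
  rw [sub_zero] at h
  exact h.congr fun x => by simp only [conjWronskian]; ring

/-- Since `V` is real, `φ̄` solves the same equation as `φ`. -/
lemma conjWronskian_deriv_eq_const {V : ℝ → ℝ} {φ : ℝ → ℂ} (hφ : ContDiff ℝ 2 φ)
    (heq : ∀ u, deriv (deriv φ) u = (V u : ℂ) * φ u) (u v : ℝ) :
    conjWronskian (φ u) (deriv φ u) = conjWronskian (φ v) (deriv φ v) := by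
  have hφ' : Differentiable ℝ φ := hφ.differentiable (by norm_num)
  have hφ'' : Differentiable ℝ (deriv φ) := hφ.differentiable_deriv_two
  have hderiv : ∀ u, HasDerivAt (fun u => conjWronskian (φ u) (deriv φ u)) 0 u := by
    intro u
    have h : HasDerivAt (fun u => conjWronskian (φ u) (deriv φ u))
        (deriv φ u * conj (deriv φ u) + φ u * conj (deriv (deriv φ) u)
          - (deriv (deriv φ) u * conj (φ u) + deriv φ u * conj (deriv φ u))) u :=
      ((hφ' u).hasDerivAt.mul (hφ'' u).hasDerivAt.star).sub
        ((hφ'' u).hasDerivAt.mul (hφ' u).hasDerivAt.star)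
    convert h using 1
    rw [heq u, map_mul, Complex.conj_ofReal]
    ring
  exact is_const_of_deriv_eq_zero (fun u => (hderiv u).differentiableAt)
    (fun u => (hderiv u).deriv) u v

lemma conjWronskian_deriv_eq_of_tendsto {V : ℝ → ℝ} {φ : ℝ → ℂ} (hφ : ContDiff ℝ 2 φ)
    (heq : ∀ u, deriv (deriv φ) u = (V u : ℂ) * φ u) {l : Filter ℝ} [l.NeBot] {k : ℝ}
    (hφ₀ : Tendsto (fun u : ℝ => φ u - Complex.exp (Complex.I * k * u)) l (𝓝 0))
    (hφ₁ : Tendsto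
      (fun u : ℝ => deriv φ u - Complex.I * k * Complex.exp (Complex.I * k * u)) l (𝓝 0))
    (u : ℝ) :
    conjWronskian (φ u) (deriv φ u) = -2 * Complex.I * k := by
  have norm_wave : ∀ v : ℝ, ‖Complex.exp (Complex.I * k * v)‖ = 1 := fun v => by
    simp [Complex.norm_exp]
  have hlim := hφ₀.conjWronskian_sub hφ₁
    (isBoundedUnder_of ⟨1, fun v => (norm_wave v).le⟩)
    (isBoundedUnder_of ⟨|k|, fun v => by simp [norm_wave]⟩)
  simp only [conjWronskian_I_mul, norm_wave, Complex.ofReal_one, one_pow, mul_one,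
    conjWronskian_deriv_eq_const hφ heq _ u, tendsto_const_nhds_iff] at hlim
  exact sub_eq_zero.mp hlim

theorem superradiance_flux_relation_general (V : ℝ → ℝ)
    (ω Ω : ℝ) (hω : ω ≠ 0) (φin φout : ℝ → ℂ)
    (hin : ContDiff ℝ 2 φin) (hout : ContDiff ℝ 2 φout)
    (heqin : ∀ u : ℝ, deriv (deriv φin) u = (V u : ℂ) * φin u)
    (heqout : ∀ u : ℝ, deriv (deriv φout) u = (V u : ℂ) * φout u)
    (h₁ : Tendsto (fun u : ℝ => φin u - Complex.exp (Complex.I * Ω * u))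
      atBot (nhds 0))
    (h₂ : Tendsto
      (fun u : ℝ => deriv φin u - Complex.I * Ω * Complex.exp (Complex.I * Ω * u))
      atBot (nhds 0))
    (h₃ : Tendsto (fun u : ℝ => φout u - Complex.exp (-(Complex.I * ω * u)))
      atTop (nhds 0))
    (h₄ : Tendsto
      (fun u : ℝ => deriv φout u + Complex.I * ω * Complex.exp (-(Complex.I * ω * u)))
      atTop (nhds 0))
    (A B : ℂ)
    (hAB : ∀ u : ℝ, (starRingEnd ℂ) (φin u) = A * φout u + B * (starRingEnd ℂ) (φout u)) :
    ‖A‖ ^ 2 - ‖B‖ ^ 2 = Ω / ω := by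
  have hW_in : conjWronskian (φin 0) (deriv φin 0) = -2 * Complex.I * Ω :=
    conjWronskian_deriv_eq_of_tendsto (l := atBot) hin heqin h₁ h₂ 0
  have wave_neg : ∀ u : ℝ, -(Complex.I * ω * u) = Complex.I * (-ω : ℝ) * u := fun u => by
    push_cast; ring
  have hW_out : conjWronskian (φout 0) (deriv φout 0) = -2 * Complex.I * (-ω : ℝ) := by
    refine conjWronskian_deriv_eq_of_tendsto (l := atTop) hout heqout ?_ ?_ 0
    · simpa only [wave_neg] using h₃
    · refine h₄.congr fun u => ?_
      rw [wave_neg]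
      push_cast
      ring
  have hφout : Differentiable ℝ φout := hout.differentiable (by norm_num)
  have hderiv_AB : conj (deriv φin 0)
      = A * deriv φout 0 + B * conj (deriv φout 0) := by
    have h : conj (deriv φin 0) = deriv (fun u => conj (φin u)) 0 := deriv.star.symm
    rw [h, funext hAB]
    exact (((hφout 0).hasDerivAt.const_mul A).add
      ((hφout 0).hasDerivAt.star.const_mul B)).deriv
  have hflux : (2 * Complex.I * Ω : ℂ) = (‖A‖ ^ 2 - ‖B‖ ^ 2 : ℝ) * (2 * Complex.I * ω) := by
    calc (2 * Complex.I * Ω : ℂ) = -conjWronskian (φin 0) (deriv φin 0) := by rw [hW_in]; ring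
      _ = conjWronskian (conj (φin 0)) (conj (deriv φin 0)) := (conjWronskian_conj _ _).symm
      _ = _ := by rw [hAB, hderiv_AB, conjWronskian_add_conj, hW_out]; push_cast; ring
  have hΩ : Ω = (‖A‖ ^ 2 - ‖B‖ ^ 2) * ω := by
    have h2I : (2 * Complex.I : ℂ) ≠ 0 := by simp
    have h : (Ω : ℂ) = ((‖A‖ ^ 2 - ‖B‖ ^ 2) * ω : ℝ) :=
      mul_left_cancel₀ h2I (by push_cast at hflux ⊢; linear_combination hflux)
    exact_mod_cast h
  rw [hΩ, mul_div_cancel_right₀ _ hω]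

/-- **The superradiance flux relation `|A|² − |B|² = Ω/ω`.**
Let `V : ℝ → ℝ` be continuous, `ω ≠ 0` and `Ω` real. Let `φ́, φ̀ : ℝ → ℂ` be `C²`
solutions of `φ'' = V φ` with Jost asymptotics `φ́(u) ∼ e^{iΩu}` (with derivative
`iΩ e^{iΩu}`) as `u → −∞` and `φ̀(u) ∼ e^{−iωu}` (with derivative `−iω e^{−iωu}`)
as `u → +∞`. If `A, B ∈ ℂ` are such that `conj φ́ = A φ̀ + B (conj φ̀)` on `ℝ`,
then the reflection and transmission coefficients satisfy `|A|² − |B|² = Ω/ω`. -/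
theorem superradiance_flux_relation (V : ℝ → ℝ) (hV : Continuous V)
    (ω Ω : ℝ) (hω : ω ≠ 0) (φin φout : ℝ → ℂ)
    (hin : ContDiff ℝ 2 φin) (hout : ContDiff ℝ 2 φout)
    (heqin : ∀ u : ℝ, deriv (deriv φin) u = (V u : ℂ) * φin u)
    (heqout : ∀ u : ℝ, deriv (deriv φout) u = (V u : ℂ) * φout u)
    (h₁ : Tendsto (fun u : ℝ => φin u - Complex.exp (Complex.I * Ω * u))
      atBot (nhds 0))
    (h₂ : Tendsto
      (fun u : ℝ => deriv φin u - Complex.I * Ω * Complex.exp (Complex.I * Ω * u))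
      atBot (nhds 0))
    (h₃ : Tendsto (fun u : ℝ => φout u - Complex.exp (-(Complex.I * ω * u)))
      atTop (nhds 0))
    (h₄ : Tendsto
      (fun u : ℝ => deriv φout u + Complex.I * ω * Complex.exp (-(Complex.I * ω * u)))
      atTop (nhds 0))
    (A B : ℂ)
    (hAB : ∀ u : ℝ, (starRingEnd ℂ) (φin u) = A * φout u + B * (starRingEnd ℂ) (φout u)) :
    ‖A‖ ^ 2 - ‖B‖ ^ 2 = Ω / ω :=
  superradiance_flux_relation_general V ω Ω hω φin φout hin hout heqin heqout h₁ h₂ h₃ h₄ A B hAB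
end
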